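/- arXiv:1901.00605 — 6 statements merged into one kernel-verified Lean document; each statement's English description precedes it below -/
import Mathlib

section
/- Let $a, m, s$ be positive integers, $k \geq 1$, and set $r = 1 + 2ams$, $u = 1 + 2a^2 m r^{k-1}$, $v = a$, $w = 2am$, $x = (s + a r^k)/(2a)$. Then for each integer $n$ with $0 \le n \le k-1$, the matrix $N_n = \begin{pmatrix} u & r^{k-1-n} v \\ r^n w & r u - 2 v w x \end{pmatrix}$ factors as $\begin{pmatrix} a r^{k-1-n} & 1 \\ 1 & 0 \end{pmatrix} \begin{pmatrix} 2am\, r^n & 1 \\ 1 & 0 \end{pmatrix}$. -/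
theorem Matrix.cf_mul_cf {R : Type*} [Semiring R] (p q : R) :
    !![p, 1; 1, 0] * !![q, 1; 1, 0] = !![p * q + 1, p; q, 1] := by
  simp

theorem Nn_factorization_general (a m s k : ℕ) (ha : 0 < a)
    (hk : 1 ≤ k) (n : ℕ) (hn : n ≤ k - 1) :
    let r : ℚ := 1 + 2 * a * m * s
    let u : ℚ := 1 + 2 * (a : ℚ) ^ 2 * m * r ^ (k - 1)
    let v : ℚ := a
    let w : ℚ := 2 * a * m
    let x : ℚ := (s + a * r ^ k) / (2 * a)
    (!![u, r ^ (k - 1 - n) * v; r ^ n * w, r * u - 2 * v * w * x] :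
        Matrix (Fin 2) (Fin 2) ℚ) =
      !![(a : ℚ) * r ^ (k - 1 - n), 1; 1, 0] * !![2 * (a : ℚ) * m * r ^ n, 1; 1, 0] := by
  intro r u v w x
  have ha_ne : (a : ℚ) ≠ 0 := by positivity
  have hsplit : r ^ (k - 1 - n) * r ^ n = r ^ (k - 1) := by
    rw [← pow_add, Nat.sub_add_cancel hn]
  have hrk : r ^ k = r * r ^ (k - 1) := by
    rw [← pow_succ', Nat.sub_add_cancel hk]
  -- the `a ^ 2 * m * r ^ k` terms cancel, leaving `r - 2ams = 1`
  have hcorner : r * u - 2 * v * w * x = 1 := by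
    simp only [u, v, w, x, hrk]
    field_simp
    ring
  have hu : u = a * r ^ (k - 1 - n) * (2 * a * m * r ^ n) + 1 := by
    linear_combination (-2 * (a : ℚ) ^ 2 * m) * hsplit
  rw [hcorner, hu, Matrix.cf_mul_cf]
  ext i j
  fin_cases i <;> fin_cases j <;> simp [v, w] <;> ring

/-- the factorization of the matrices `N_n` used to prove
Theorem 1 (with `r = 1 + 2ams`). -/
theorem Nn_factorization (a m s k : ℕ) (ha : 0 < a) (hm : 0 < m) (hs : 0 < s)
    (hk : 1 ≤ k) (n : ℕ) (hn : n ≤ k - 1) :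
    let r : ℚ := 1 + 2 * a * m * s
    let u : ℚ := 1 + 2 * (a : ℚ) ^ 2 * m * r ^ (k - 1)
    let v : ℚ := a
    let w : ℚ := 2 * a * m
    let x : ℚ := (s + a * r ^ k) / (2 * a)
    (!![u, r ^ (k - 1 - n) * v; r ^ n * w, r * u - 2 * v * w * x] :
        Matrix (Fin 2) (Fin 2) ℚ) =
      !![(a : ℚ) * r ^ (k - 1 - n), 1; 1, 0] * !![2 * (a : ℚ) * m * r ^ n, 1; 1, 0] :=
  Nn_factorization_general a m s k ha hk n hn
end

section
/- Let $a, m, s, k$ be positive integers and set $D = m\big(2(1 + 2ams)^k + m(s + a(1 + 2ams)^k)^2\big)$. Then the regular continued fraction expansion of $\sqrt{D}$ is periodic with $\sqrt{D} = [m(s + a(1+2ams)^k);\; \overline{a,\, 2am(1+2ams)^{k-1},\, a(1+2ams),\, 2am(1+2ams)^{k-2},\, \dots,\, a(1+2ams)^{k-1},\, 2am,\, s + a(1+2ams)^k,\, 2am,\, a(1+2ams)^{k-1},\, \dots,\, 2am(1+2ams)^{k-1},\, a,\, 2m(s + a(1+2ams)^k)}]$, and the fundamental period has length $4k + 2$.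 -/
/-- The Gauss-map iterates of `x`: `cfX x 0 = x` and
`cfX x (n+1) = 1 / (cfX x n - ⌊cfX x n⌋)`. -/
noncomputable def cfX (x : ℝ) : ℕ → ℝ
  | 0 => x
  | n + 1 => (cfX x n - ⌊cfX x n⌋)⁻¹

/-- The `n`-th partial quotient of the regular continued fraction of `x`. -/
noncomputable def cfA (x : ℝ) (n : ℕ) : ℤ := ⌊cfX x n⌋

/-- `p` is a period (from index `1` on) of the continued fraction expansion of `x`. -/
def cfPeriod (x : ℝ) (p : ℕ) : Prop :=
  0 < p ∧ ∀ n, 1 ≤ n → cfA x (n + p) = cfA x n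

/-!
Write `r = 1 + 2ams`, `c = s + a r^k` and `e = a r^k - s`. Then `mc + me = 2am r^k` and
`D = (mc)² + 2m r^k = (me)² + 2m r^(k+1)`, so the complete quotients of `√D` can be written
down explicitly as `(P + √D) / Q` with `P ∈ {mc, me}` and `Q` equal to `r^j` or `2m r^j`.
Each step of the algorithm is certified by the integer recurrences `P' = vQ - P`,
`QQ' = D - P'²` together with `P' < √D < P' + Q`, which identify `v` as the floor. The period
`4k + 2` is the fundamental one because its last partial quotient `2mc` exceeds all the others.
-/

/-- The last two fields say `P' < √D < P' + Q`, which makes `v` the floor of `(P + √D) / Q`. -/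
structure IsCFStep (D P Q v P' Q' : ℤ) : Prop where
  Q_pos : 0 < Q
  Q'_pos : 0 < Q'
  P'_eq : P' = v * Q - P
  mul_eq : Q * Q' = D - P' ^ 2
  P'_nonneg : 0 ≤ P'
  Q'_lt : Q' < 2 * P' + Q

namespace IsCFStep

variable {D P Q v P' Q' : ℤ}

theorem lt_sqrt (h : IsCFStep D P Q v P' Q') : (P' : ℝ) < √(D : ℝ) := by
  have hsq : (P' : ℤ) ^ 2 < D := by nlinarith [h.Q_pos, h.Q'_pos, h.mul_eq]
  exact Real.lt_sqrt_of_sq_lt (by exact_mod_cast hsq)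

theorem sqrt_lt (h : IsCFStep D P Q v P' Q') : √(D : ℝ) < P' + Q := by
  have hsq : D < (P' + Q) ^ 2 := by nlinarith [h.Q_pos, h.Q'_lt, h.mul_eq]
  rw [Real.sqrt_lt' (by exact_mod_cast (by linarith [h.P'_nonneg, h.Q_pos] : 0 < P' + Q))]
  exact_mod_cast hsq

theorem floor_eq (h : IsCFStep D P Q v P' Q') : ⌊(P + √(D : ℝ)) / Q⌋ = v := by
  have hQ : (0 : ℝ) < Q := by exact_mod_cast h.Q_pos
  have hvQ : (v : ℝ) * Q = P' + P := by exact_mod_cast (by linarith [h.P'_eq] : v * Q = P' + P)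
  rw [Int.floor_eq_iff, le_div_iff₀ hQ, div_lt_iff₀ hQ]
  constructor <;> nlinarith [h.lt_sqrt, h.sqrt_lt]

theorem inv_sub_eq (h : IsCFStep D P Q v P' Q') :
    ((P + √(D : ℝ)) / Q - v)⁻¹ = (P' + √(D : ℝ)) / Q' := by
  have hQ : (Q : ℝ) ≠ 0 := by exact_mod_cast h.Q_pos.ne'
  have hQ' : (Q' : ℝ) ≠ 0 := by exact_mod_cast h.Q'_pos.ne'
  have hP' : (P' : ℝ) = v * Q - P := by exact_mod_cast h.P'_eq
  have hmul : (Q : ℝ) * Q' = D - P' ^ 2 := by exact_mod_cast h.mul_eq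
  have hD : 0 ≤ D := by nlinarith [h.Q_pos, h.Q'_pos, h.mul_eq]
  have hsqrt : √(D : ℝ) ^ 2 = D := Real.sq_sqrt (by exact_mod_cast hD)
  have hne : √(D : ℝ) - P' ≠ 0 := (sub_pos.2 h.lt_sqrt).ne'
  have hsub : (P + √(D : ℝ)) / Q - v = (√(D : ℝ) - P') / Q := by
    field_simp
    linarith
  rw [hsub, inv_div, div_eq_div_iff hne hQ']
  linear_combination hmul - hsqrt

end IsCFStep

theorem cfX_sqrt_eq_of_isCFStep {D : ℤ} {P Q v : ℕ → ℤ} (hP : P 0 = 0) (hQ : Q 0 = 1)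
    (h : ∀ n, IsCFStep D (P n) (Q n) (v n) (P (n + 1)) (Q (n + 1))) (n : ℕ) :
    cfX √(D : ℝ) n = (P n + √(D : ℝ)) / Q n := by
  induction n with
  | zero => simp [cfX, hP, hQ]
  | succ n ih => rw [cfX, ih, (h n).floor_eq, (h n).inv_sub_eq]

theorem cfA_sqrt_eq_of_isCFStep {D : ℤ} {P Q v : ℕ → ℤ} (hP : P 0 = 0) (hQ : Q 0 = 1)
    (h : ∀ n, IsCFStep D (P n) (Q n) (v n) (P (n + 1)) (Q (n + 1))) (n : ℕ) :
    cfA √(D : ℝ) n = v n := by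
  rw [cfA, cfX_sqrt_eq_of_isCFStep hP hQ h, (h n).floor_eq]

theorem isLeast_cfPeriod_of_lt {x : ℝ} {L : ℕ} (hL : 0 < L)
    (hper : ∀ n, 1 ≤ n → cfA x (n + L) = cfA x n)
    (hlt : ∀ i, 1 ≤ i → i < L → cfA x i < cfA x L) :
    IsLeast {p | cfPeriod x p} L := by
  refine ⟨⟨hL, hper⟩, fun p ⟨hp, hpper⟩ => ?_⟩
  by_contra! hpL
  have heq := hpper (L - p) (by omega)
  rw [Nat.sub_add_cancel hpL.le] at heq
  exact (hlt (L - p) (by omega) (by omega)).ne heq.symm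

namespace SqrtFamily

variable (a m s k : ℕ)

def r : ℤ := 1 + 2 * a * m * s

def c : ℤ := s + a * r a m s ^ k

def e : ℤ := a * r a m s ^ k - s

def D : ℤ := m * (2 * r a m s ^ k + m * c a m s k ^ 2)

theorem mul_c_add_mul_e : m * c a m s k + m * e a m s k = 2 * a * m * r a m s ^ k := by
  unfold c e; ring

theorem D_eq_mul_c_sq : D a m s k = (m * c a m s k) ^ 2 + 2 * m * r a m s ^ k := by
  unfold D; ring

theorem D_eq_mul_e_sq : D a m s k = (m * e a m s k) ^ 2 + 2 * m * r a m s ^ (k + 1) := by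
  unfold D c e; rw [pow_succ, r]; ring

variable {a m s k}

theorem two_mul_mul_lt_r (ha : 0 < a) : 2 * m * (s : ℤ) < r a m s := by
  have : (1 : ℤ) ≤ a := by exact_mod_cast ha
  unfold r; nlinarith [mul_nonneg (by positivity : (0 : ℤ) ≤ 2 * m * s) (sub_nonneg.2 this)]

theorem one_le_r : 1 ≤ r a m s := by
  have : (0 : ℤ) ≤ 2 * a * m * s := by positivity
  unfold r; linarith

theorem pow_r_pos : 0 < r a m s ^ k :=
  pow_pos (by linarith [one_le_r (a := a) (m := m) (s := s)]) k

theorem pow_r_mono {i j : ℕ} (h : i ≤ j) : r a m s ^ i ≤ r a m s ^ j :=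
  pow_le_pow_right₀ one_le_r h

theorem pow_r_mul_pow_r {i j n : ℕ} (h : i + j = n) :
    r a m s ^ i * r a m s ^ j = r a m s ^ n := by
  rw [← pow_add, h]

theorem two_mul_pow_r_pos (hm : 0 < m) (i : ℕ) : 0 < 2 * m * r a m s ^ i :=
  mul_pos (by positivity) pow_r_pos

theorem pow_r_le_two_mul_pow_r (hm : 0 < m) {i : ℕ} (hi : i ≤ k) :
    r a m s ^ i ≤ 2 * m * r a m s ^ k := by
  have : (1 : ℤ) ≤ 2 * m := by
    have : (1 : ℤ) ≤ m := by exact_mod_cast hm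
    linarith
  exact (pow_r_mono hi).trans (le_mul_of_one_le_left pow_r_pos.le this)

theorem two_mul_pow_r_le (hm : 0 < m) {i : ℕ} (hi : i ≤ k) :
    2 * m * r a m s ^ i ≤ 2 * m * r a m s ^ k := by
  have : (0 : ℤ) ≤ 2 * m := by positivity
  exact mul_le_mul_of_nonneg_left (pow_r_mono hi) this

theorem pow_lt_c (ha : 0 < a) (hs : 0 < s) : r a m s ^ k < c a m s k := by
  have : (1 : ℤ) ≤ a := by exact_mod_cast ha
  have hs' : (0 : ℤ) < s := by exact_mod_cast hs
  unfold c; nlinarith [pow_r_pos (a := a) (m := m) (s := s) (k := k)]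

theorem c_pos (ha : 0 < a) (hs : 0 < s) : 0 < c a m s k :=
  pow_r_pos.trans (pow_lt_c ha hs)

theorem e_pos (ha : 0 < a) (hm : 0 < m) (hk : 0 < k) : 0 < e a m s k := by
  have h1 : (1 : ℤ) ≤ a := by exact_mod_cast ha
  have h2 : r a m s ≤ r a m s ^ k := le_self_pow₀ one_le_r hk.ne'
  have h3 : (s : ℤ) ≤ 2 * m * s := by
    nlinarith [(by exact_mod_cast hm : (1 : ℤ) ≤ m), (by positivity : (0 : ℤ) ≤ s)]
  have h4 := two_mul_mul_lt_r (m := m) (s := s) ha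
  unfold e; nlinarith

theorem isCFStep_to_c (ha : 0 < a) (hm : 0 < m) (hs : 0 < s) {P Q v Q' : ℤ}
    (hv : v * Q = P + m * c a m s k) (hmul : Q * Q' = 2 * m * r a m s ^ k)
    (hQ : 0 < Q) (hQ' : 0 < Q') (hQ'le : Q' ≤ 2 * m * r a m s ^ k) :
    IsCFStep (D a m s k) P Q v (m * c a m s k) Q' where
  Q_pos := hQ
  Q'_pos := hQ'
  P'_eq := by linarith
  mul_eq := by rw [D_eq_mul_c_sq]; linarith
  P'_nonneg := (mul_pos (by exact_mod_cast hm) (c_pos ha hs)).le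
  Q'_lt := by
    have := pow_lt_c (m := m) (k := k) ha hs
    nlinarith [(by exact_mod_cast hm : (0 : ℤ) < m)]

theorem isCFStep_to_e (ha : 0 < a) (hm : 0 < m) (hk : 0 < k) {P Q v Q' : ℤ}
    (hv : v * Q = P + m * e a m s k) (hmul : Q * Q' = 2 * m * r a m s ^ (k + 1))
    (hQ : r a m s ≤ Q) (hQ' : 0 < Q') (hQ'le : Q' ≤ 2 * m * r a m s ^ k) :
    IsCFStep (D a m s k) P Q v (m * e a m s k) Q' where
  Q_pos := by linarith [one_le_r (a := a) (m := m) (s := s)]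
  Q'_pos := hQ'
  P'_eq := by linarith
  mul_eq := by rw [D_eq_mul_e_sq]; linarith
  P'_nonneg := (mul_pos (by exact_mod_cast hm) (e_pos ha hm hk)).le
  Q'_lt := by
    have h1 := mul_c_add_mul_e a m s k
    have h2 := two_mul_mul_lt_r (m := m) (s := s) ha
    have h3 : (1 : ℤ) ≤ a := by exact_mod_cast ha
    have h4 := (two_mul_pow_r_pos (a := a) (s := s) hm k).le
    unfold c at h1
    nlinarith

theorem isCFStep_one (ha : 0 < a) (hm : 0 < m) (hs : 0 < s) (P : ℤ) :
    IsCFStep (D a m s k) P 1 (P + m * c a m s k) (m * c a m s k) (2 * m * r a m s ^ k) :=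
  isCFStep_to_c ha hm hs (by ring) (by ring) one_pos
    (two_mul_pow_r_pos hm _) le_rfl

theorem isCFStep_center (ha : 0 < a) (hm : 0 < m) (hs : 0 < s) :
    IsCFStep (D a m s k) (m * c a m s k) (2 * m) (c a m s k) (m * c a m s k) (r a m s ^ k) :=
  isCFStep_to_c ha hm hs (by ring) (by ring) (by positivity) pow_r_pos
    (pow_r_le_two_mul_pow_r hm le_rfl)

theorem isCFStep_firstHalf_odd (ha : 0 < a) (hm : 0 < m) (hk : 0 < k) {j : ℕ} (hj : j < k) :
    IsCFStep (D a m s k) (m * c a m s k) (2 * m * r a m s ^ (k - j)) (a * r a m s ^ j)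
      (m * e a m s k) (r a m s ^ (j + 1)) := by
  refine isCFStep_to_e ha hm hk ?_ ?_ ?_ pow_r_pos (pow_r_le_two_mul_pow_r hm (by omega))
  · rw [mul_c_add_mul_e, ← pow_r_mul_pow_r (Nat.add_sub_of_le hj.le)]; ring
  · rw [← pow_r_mul_pow_r (show k - j + (j + 1) = k + 1 by omega)]; ring
  · calc r a m s = r a m s ^ 1 := (pow_one _).symm
      _ ≤ r a m s ^ (k - j) := pow_r_mono (by omega)
      _ ≤ 2 * m * r a m s ^ (k - j) := by
        have : (1 : ℤ) ≤ m := by exact_mod_cast hm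
        nlinarith [pow_r_pos (a := a) (m := m) (s := s) (k := k - j)]

theorem isCFStep_firstHalf_even (ha : 0 < a) (hm : 0 < m) (hs : 0 < s) {u : ℕ} (hu : u ≤ k) :
    IsCFStep (D a m s k) (m * e a m s k) (r a m s ^ u) (2 * a * m * r a m s ^ (k - u))
      (m * c a m s k) (2 * m * r a m s ^ (k - u)) := by
  refine isCFStep_to_c ha hm hs ?_ ?_ pow_r_pos (two_mul_pow_r_pos hm _)
    (two_mul_pow_r_le hm (by omega))
  · rw [add_comm, mul_c_add_mul_e, ← pow_r_mul_pow_r (Nat.sub_add_cancel hu)]; ring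
  · rw [← pow_r_mul_pow_r (Nat.add_sub_of_le hu)]; ring

theorem isCFStep_secondHalf_even (ha : 0 < a) (hm : 0 < m) (hk : 0 < k) {w : ℕ} (hw : w < k) :
    IsCFStep (D a m s k) (m * c a m s k) (r a m s ^ (w + 1))
      (2 * a * m * r a m s ^ (k - (w + 1))) (m * e a m s k) (2 * m * r a m s ^ (k - w)) := by
  refine isCFStep_to_e ha hm hk ?_ ?_ ?_
    (two_mul_pow_r_pos hm _)
    (two_mul_pow_r_le hm (by omega))
  · rw [mul_c_add_mul_e, ← pow_r_mul_pow_r (show k - (w + 1) + (w + 1) = k by omega)]; ring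
  · rw [← pow_r_mul_pow_r (show w + 1 + (k - w) = k + 1 by omega)]; ring
  · simpa using pow_r_mono (a := a) (m := m) (s := s) (Nat.le_add_left 1 w)

theorem isCFStep_secondHalf_odd (ha : 0 < a) (hm : 0 < m) (hs : 0 < s) {w : ℕ} (hw : w < k) :
    IsCFStep (D a m s k) (m * e a m s k) (2 * m * r a m s ^ (k - w)) (a * r a m s ^ w)
      (m * c a m s k) (r a m s ^ w) := by
  refine isCFStep_to_c ha hm hs ?_ ?_ (two_mul_pow_r_pos hm _) pow_r_pos
    (pow_r_le_two_mul_pow_r hm hw.le)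
  · rw [add_comm, mul_c_add_mul_e, ← pow_r_mul_pow_r (Nat.add_sub_of_le hw.le)]; ring
  · rw [← pow_r_mul_pow_r (Nat.sub_add_cancel hw.le)]; ring

variable (a m s k)

def fold (i : ℕ) : ℕ := if i ≤ 2 * k + 1 then i else 4 * k + 2 - i

/- `blockP i`, `blockQ i`, `blockA i` are `P`, `Q` and the partial quotient at position
`i ∈ [1, 4k + 2]` of the period. `Q` and the partial quotient are palindromic, read off
`fold k i ∈ [0, 2k + 1]`; `blockA` is literally the block `q` of the statement. -/
def blockP (i : ℕ) : ℤ :=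
  if (i % 2 = 1 ↔ i ≤ 2 * k + 1) then m * c a m s k else m * e a m s k

def blockQ (i : ℕ) : ℤ :=
  let t := fold k i
  if t % 2 = 1 then 2 * m * r a m s ^ (k - t / 2) else r a m s ^ (t / 2)

def blockA (i : ℕ) : ℤ :=
  if i = 4 * k + 2 then 2 * (m * c a m s k)
  else
    let t := fold k i
    if t = 2 * k + 1 then c a m s k
    else if t % 2 = 1 then a * r a m s ^ (t / 2)
    else 2 * a * m * r a m s ^ (k - t / 2)

variable {a m s k}

theorem fold_eq_of_le {i : ℕ} (h : i ≤ 2 * k + 1) : fold k i = i := if_pos h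

theorem fold_eq_of_gt {i : ℕ} (h : 2 * k + 1 < i) : fold k i = 4 * k + 2 - i := if_neg (by omega)

theorem blockQ_of_fold_odd {i j : ℕ} (h : fold k i = 2 * j + 1) :
    blockQ a m s k i = 2 * m * r a m s ^ (k - j) := by
  simp only [blockQ, h]
  rw [if_pos (by omega), show (2 * j + 1) / 2 = j by omega]

theorem blockQ_of_fold_even {i u : ℕ} (h : fold k i = 2 * u) :
    blockQ a m s k i = r a m s ^ u := by
  simp only [blockQ, h]
  rw [if_neg (by omega), show 2 * u / 2 = u by omega]

theorem blockA_of_fold_center {i : ℕ} (hi : i ≠ 4 * k + 2) (h : fold k i = 2 * k + 1) :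
    blockA a m s k i = c a m s k := by
  simp only [blockA, h, if_neg hi, if_true]

theorem blockA_of_fold_odd {i j : ℕ} (hi : i ≠ 4 * k + 2) (h : fold k i = 2 * j + 1)
    (hj : j < k) : blockA a m s k i = a * r a m s ^ j := by
  simp only [blockA, h, if_neg hi]
  rw [if_neg (by omega), if_pos (by omega), show (2 * j + 1) / 2 = j by omega]

theorem blockA_of_fold_even {i u : ℕ} (hi : i ≠ 4 * k + 2) (h : fold k i = 2 * u) :
    blockA a m s k i = 2 * a * m * r a m s ^ (k - u) := by
  simp only [blockA, h, if_neg hi]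
  rw [if_neg (by omega), if_neg (by omega), show 2 * u / 2 = u by omega]

theorem blockA_last : blockA a m s k (4 * k + 2) = 2 * (m * c a m s k) := if_pos rfl

theorem isCFStep_block_firstHalf (ha : 0 < a) (hm : 0 < m) (hs : 0 < s) (hk : 0 < k) {i : ℕ}
    (h1 : 1 ≤ i) (h2 : i ≤ 2 * k + 1) :
    IsCFStep (D a m s k) (blockP a m s k i) (blockQ a m s k i) (blockA a m s k i)
      (blockP a m s k (i + 1)) (blockQ a m s k (i + 1)) := by
  have hfold : fold k i = i := fold_eq_of_le h2
  have hi : i ≠ 4 * k + 2 := by omega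
  have hP : blockP a m s k i = if i % 2 = 1 then m * c a m s k else m * e a m s k := by
    simp only [blockP, h2, iff_true]
  rcases Nat.even_or_odd' i with ⟨u, rfl | rfl⟩
  · have hP' : blockP a m s k (2 * u + 1) = m * c a m s k := if_pos (by omega)
    rw [hP, if_neg (by omega), hP', blockQ_of_fold_even hfold, blockA_of_fold_even hi hfold,
      blockQ_of_fold_odd (j := u) (fold_eq_of_le (by omega))]
    exact isCFStep_firstHalf_even ha hm hs (by omega)
  · rcases eq_or_ne k u with rfl | hc
    · have hP' : blockP a m s k (2 * k + 1 + 1) = m * c a m s k := if_pos (by omega)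
      rw [hP, if_pos (by omega), hP', blockQ_of_fold_odd hfold, blockA_of_fold_center hi hfold,
        blockQ_of_fold_even (u := k) (fold_eq_of_gt (by omega) |>.trans (by omega)),
        Nat.sub_self, pow_zero, mul_one]
      exact isCFStep_center ha hm hs
    · have hP' : blockP a m s k (2 * u + 1 + 1) = m * e a m s k := if_neg (by omega)
      rw [hP, if_pos (by omega), hP', blockQ_of_fold_odd hfold,
        blockA_of_fold_odd hi hfold (by omega),
        blockQ_of_fold_even (u := u + 1) (fold_eq_of_le (by omega) |>.trans (by omega))]
      exact isCFStep_firstHalf_odd ha hm hk (by omega)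

theorem isCFStep_block_secondHalf (ha : 0 < a) (hm : 0 < m) (hs : 0 < s) (hk : 0 < k) {i : ℕ}
    (h1 : 2 * k + 1 < i) (h2 : i < 4 * k + 2) :
    IsCFStep (D a m s k) (blockP a m s k i) (blockQ a m s k i) (blockA a m s k i)
      (blockP a m s k (i + 1)) (blockQ a m s k (i + 1)) := by
  have hi : i ≠ 4 * k + 2 := by omega
  rcases Nat.even_or_odd' i with ⟨u, rfl | rfl⟩
  · have hfold : fold k (2 * u) = 2 * (2 * k - u + 1) := fold_eq_of_gt h1 |>.trans (by omega)
    have hP : blockP a m s k (2 * u) = m * c a m s k := if_pos (by omega)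
    have hP' : blockP a m s k (2 * u + 1) = m * e a m s k := if_neg (by omega)
    rw [hP, hP', blockQ_of_fold_even hfold, blockA_of_fold_even hi hfold,
      blockQ_of_fold_odd (j := 2 * k - u) (fold_eq_of_gt (by omega) |>.trans (by omega))]
    exact isCFStep_secondHalf_even ha hm hk (by omega)
  · have hfold : fold k (2 * u + 1) = 2 * (2 * k - u) + 1 := fold_eq_of_gt h1 |>.trans (by omega)
    have hP : blockP a m s k (2 * u + 1) = m * e a m s k := if_neg (by omega)
    have hP' : blockP a m s k (2 * u + 1 + 1) = m * c a m s k := if_pos (by omega)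
    rw [hP, hP', blockQ_of_fold_odd hfold, blockA_of_fold_odd hi hfold (by omega),
      blockQ_of_fold_even (u := 2 * k - u) (fold_eq_of_gt (by omega) |>.trans (by omega))]
    exact isCFStep_secondHalf_odd ha hm hs (by omega)

theorem blockP_one : blockP a m s k 1 = m * c a m s k := if_pos (by omega)

theorem blockQ_one : blockQ a m s k 1 = 2 * m * r a m s ^ k := by
  rw [blockQ_of_fold_odd (j := 0) (fold_eq_of_le (by omega)), Nat.sub_zero]

theorem isCFStep_block_last (ha : 0 < a) (hm : 0 < m) (hs : 0 < s) :
    IsCFStep (D a m s k) (blockP a m s k (4 * k + 2)) (blockQ a m s k (4 * k + 2))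
      (blockA a m s k (4 * k + 2)) (blockP a m s k 1) (blockQ a m s k 1) := by
  have hP : blockP a m s k (4 * k + 2) = m * c a m s k := if_pos (by omega)
  rw [hP, blockP_one, blockQ_of_fold_even (u := 0) (fold_eq_of_gt (by omega) |>.trans (by omega)),
    blockA_last, blockQ_one, pow_zero, two_mul (_ * _)]
  exact isCFStep_one ha hm hs _

variable (a m s k)

def blockIndex (n : ℕ) : ℕ := (n - 1) % (4 * k + 2) + 1

def P (n : ℕ) : ℤ := if n = 0 then 0 else blockP a m s k (blockIndex k n)

def Q (n : ℕ) : ℤ := if n = 0 then 1 else blockQ a m s k (blockIndex k n)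

def A (n : ℕ) : ℤ := if n = 0 then m * c a m s k else blockA a m s k (blockIndex k n)

variable {a m s k}

theorem blockIndex_succ {n : ℕ} (hn : 1 ≤ n) :
    blockIndex k (n + 1) = blockIndex k n % (4 * k + 2) + 1 := by
  rw [blockIndex, blockIndex, Nat.mod_add_mod, Nat.sub_add_cancel hn, Nat.add_sub_cancel]

theorem isCFStep_block (ha : 0 < a) (hm : 0 < m) (hs : 0 < s) (hk : 0 < k) {i : ℕ}
    (h1 : 1 ≤ i) (h2 : i ≤ 4 * k + 2) :
    IsCFStep (D a m s k) (blockP a m s k i) (blockQ a m s k i) (blockA a m s k i)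
      (blockP a m s k (i % (4 * k + 2) + 1)) (blockQ a m s k (i % (4 * k + 2) + 1)) := by
  rcases h2.eq_or_lt with rfl | h2
  · rw [Nat.mod_self]
    exact isCFStep_block_last ha hm hs
  rw [Nat.mod_eq_of_lt h2]
  rcases le_or_gt i (2 * k + 1) with h | h
  · exact isCFStep_block_firstHalf ha hm hs hk h1 h
  · exact isCFStep_block_secondHalf ha hm hs hk h h2

theorem isCFStep_seq (ha : 0 < a) (hm : 0 < m) (hs : 0 < s) (hk : 0 < k) (n : ℕ) :
    IsCFStep (D a m s k) (P a m s k n) (Q a m s k n) (A a m s k n)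
      (P a m s k (n + 1)) (Q a m s k (n + 1)) := by
  rcases Nat.eq_zero_or_pos n with rfl | hn
  · have h := isCFStep_one (k := k) ha hm hs 0
    rwa [zero_add, ← blockP_one, ← blockQ_one] at h
  · simp only [P, Q, A, if_neg hn.ne', if_neg (Nat.succ_ne_zero n), blockIndex_succ hn]
    exact isCFStep_block ha hm hs hk (Nat.le_add_left 1 _) (Nat.mod_lt _ (by omega))

theorem cfA_sqrt_D (ha : 0 < a) (hm : 0 < m) (hs : 0 < s) (hk : 0 < k) (n : ℕ) :
    cfA √((D a m s k : ℤ) : ℝ) n = A a m s k n :=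
  cfA_sqrt_eq_of_isCFStep (P := P a m s k) (Q := Q a m s k) rfl rfl (isCFStep_seq ha hm hs hk) n

theorem A_add_period {n : ℕ} (hn : 1 ≤ n) : A a m s k (n + (4 * k + 2)) = A a m s k n := by
  simp only [A, blockIndex, if_neg (show n + (4 * k + 2) ≠ 0 by omega),
    if_neg (show n ≠ 0 by omega), show n + (4 * k + 2) - 1 = n - 1 + (4 * k + 2) by omega,
    Nat.add_mod_right]

theorem a_mul_pow_r_lt_c (hs : 0 < s) {i : ℕ} (hi : i ≤ k) : a * r a m s ^ i < c a m s k := by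
  have : (a : ℤ) * r a m s ^ i ≤ a * r a m s ^ k :=
    mul_le_mul_of_nonneg_left (pow_r_mono hi) (by positivity)
  unfold c; linarith [(by exact_mod_cast hs : (0 : ℤ) < s)]

theorem blockA_lt_blockA_last (ha : 0 < a) (hm : 0 < m) (hs : 0 < s) {i : ℕ}
    (hlt : i < 4 * k + 2) : blockA a m s k i < blockA a m s k (4 * k + 2) := by
  have hc := c_pos (m := m) (k := k) ha hs
  have hm1 : (1 : ℤ) ≤ m := by exact_mod_cast hm
  have hi : i ≠ 4 * k + 2 := hlt.ne
  have hfold : fold k i ≤ 2 * k + 1 := by unfold fold; split_ifs <;> omega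
  rw [blockA_last]
  rcases Nat.even_or_odd' (fold k i) with ⟨u, hu | hu⟩
  · rw [blockA_of_fold_even hi hu]
    nlinarith [a_mul_pow_r_lt_c (a := a) (m := m) hs (Nat.sub_le k u)]
  · rcases (show u ≤ k by omega).eq_or_lt with rfl | hu'
    · rw [blockA_of_fold_center hi hu]
      nlinarith
    · rw [blockA_of_fold_odd hi hu hu']
      nlinarith [a_mul_pow_r_lt_c (a := a) (m := m) hs hu'.le]

theorem A_lt_A_period (ha : 0 < a) (hm : 0 < m) (hs : 0 < s) {i : ℕ} (h1 : 1 ≤ i)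
    (h2 : i < 4 * k + 2) : A a m s k i < A a m s k (4 * k + 2) := by
  have hidx : ∀ j, 1 ≤ j → j ≤ 4 * k + 2 → blockIndex k j = j := fun j hj1 hj2 => by
    unfold blockIndex; rw [Nat.mod_eq_of_lt (by omega)]; omega
  simp only [A, if_neg (show i ≠ 0 by omega), if_neg (show 4 * k + 2 ≠ 0 by omega),
    hidx i h1 h2.le, hidx (4 * k + 2) (by omega) le_rfl]
  exact blockA_lt_blockA_last ha hm hs h2

end SqrtFamily

/-- Theorem 1: explicit periodic continued fraction expansion of
`√D` for `D = m(2(1+2ams)^k + m(s + a(1+2ams)^k)^2)`, with fundamental period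
length `4k + 2`. -/
theorem theorem_t1 (a m s k : ℕ) (ha : 0 < a) (hm : 0 < m) (hs : 0 < s)
    (hk : 0 < k) :
    let r : ℤ := 1 + 2 * a * m * s
    let D : ℤ := m * (2 * r ^ k + m * ((s : ℤ) + a * r ^ k) ^ 2)
    -- the periodic block of partial quotients, indexed by `i = 1, …, 4k+2`
    let q : ℕ → ℤ := fun i =>
      if i = 4 * k + 2 then 2 * ((m : ℤ) * ((s : ℤ) + a * r ^ k))
      else
        let t : ℕ := if i ≤ 2 * k + 1 then i else 4 * k + 2 - i
        if t = 2 * k + 1 then (s : ℤ) + a * r ^ k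
        else if t % 2 = 1 then (a : ℤ) * r ^ (t / 2)
        else 2 * (a : ℤ) * m * r ^ (k - t / 2)
    cfA (Real.sqrt (D : ℝ)) 0 = (m : ℤ) * ((s : ℤ) + a * r ^ k) ∧
    (∀ n : ℕ, 1 ≤ n →
      cfA (Real.sqrt (D : ℝ)) n = q ((n - 1) % (4 * k + 2) + 1)) ∧
    IsLeast {p : ℕ | cfPeriod (Real.sqrt (D : ℝ)) p} (4 * k + 2) := by
  intro r D q
  have hA : ∀ n, cfA √(D : ℝ) n = SqrtFamily.A a m s k n := SqrtFamily.cfA_sqrt_D ha hm hs hk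
  refine ⟨hA 0, fun n hn => (hA n).trans (if_neg (by omega)), ?_⟩
  refine isLeast_cfPeriod_of_lt (by omega) (fun n hn => ?_) (fun i h1 h2 => ?_)
  · rw [hA, hA, SqrtFamily.A_add_period hn]
  · rw [hA, hA]
    exact SqrtFamily.A_lt_A_period ha hm hs h1 h2
end

section
/- Let $a > 1$, $m$, $s$, $k$ be positive integers, and set $r = 2ams - 1$, $u = 2a^2 m r^{k-1} - 1$, $v = a$, $w = 2am$, $x = (a r^k - s)/(2a)$. Then for each integer $n$ with $0 \le n \le k-1$, the matrix $\begin{pmatrix} u & r^{k-1-n} v \\ r^n w & ru - 2vwx \end{pmatrix}$ equals $\begin{pmatrix} a r^{k-1-n} - 1 & 1 \\ 1 & 0 \end{pmatrix} \begin{pmatrix} 1 & 1 \\ 1 & 0 \end{pmatrix} \begin{pmatrix} 2am\, r^n - 1 & 1 \\ 1 & 0 \end{pmatrix}$. -/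
/-! With `x = a r^(k-1-n) - 1` and `y = 2am r^n - 1`, the product of the three continued-fraction
matrices is `!![(x+1)(y+1) - 1, x+1; y+1, 1]`. Since `r^(k-1-n) r^n = r^(k-1)`, this matches `N_n`
entrywise except in the corner, where `2 v w x = 2am (a r^k - s)` collapses `r u - 2 v w x`
to `2ams - r = 1`. -/

theorem Matrix.continuant_mul_one_mul {R : Type*} [CommRing R] (x y : R) :
    !![x, 1; 1, 0] * !![1, 1; 1, 0] * !![y, 1; 1, 0] =
      !![(x + 1) * (y + 1) - 1, x + 1; y + 1, 1] := by
  simp only [Matrix.mul_fin_two, EmbeddingLike.apply_eq_iff_eq, Matrix.vecCons_inj, and_true]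
  refine ⟨⟨?_, ?_⟩, ?_, ?_⟩ <;> ring

theorem Nn_factorization_t1a_general (a m s k : ℕ) (ha : 1 < a)
    (hk : 1 ≤ k) (n : ℕ) (hn : n ≤ k - 1) :
    let r : ℚ := 2 * a * m * s - 1
    let u : ℚ := 2 * (a : ℚ) ^ 2 * m * r ^ (k - 1) - 1
    let v : ℚ := a
    let w : ℚ := 2 * a * m
    let x : ℚ := ((a : ℚ) * r ^ k - s) / (2 * a)
    (!![u, r ^ (k - 1 - n) * v; r ^ n * w, r * u - 2 * v * w * x] :
        Matrix (Fin 2) (Fin 2) ℚ) =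
      !![(a : ℚ) * r ^ (k - 1 - n) - 1, 1; 1, 0] * !![1, 1; 1, 0] *
        !![2 * (a : ℚ) * m * r ^ n - 1, 1; 1, 0] := by
  intro r u v w x
  have hpow : r ^ (k - 1 - n) * r ^ n = r ^ (k - 1) := by
    rw [← pow_add, Nat.sub_add_cancel hn]
  have hrk : r ^ k = r * r ^ (k - 1) := by
    rw [← pow_succ', Nat.sub_add_cancel hk]
  have hvwx : 2 * v * w * x = 2 * a * m * (a * r ^ k - s) := by
    have : (a : ℚ) ≠ 0 := by positivity
    simp only [v, w, x]
    field_simp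
  have hcorner : r * u - 2 * v * w * x = 1 := by
    rw [hvwx, hrk]
    simp only [u, r]
    ring
  rw [Matrix.continuant_mul_one_mul, hcorner, sub_add_cancel, sub_add_cancel]
  simp only [EmbeddingLike.apply_eq_iff_eq, Matrix.vecCons_inj, and_true]
  refine ⟨⟨?_, ?_⟩, ?_⟩
  · simp only [u]
    linear_combination (-2 : ℚ) * a ^ 2 * m * hpow
  · exact mul_comm _ _
  · simp only [w]
    ring

/-- the three-term factorization of the matrices `N_n` used to
prove Theorem t1a (with `r = 2ams - 1`). -/
theorem Nn_factorization_t1a (a m s k : ℕ) (ha : 1 < a) (hm : 0 < m)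
    (hs : 0 < s) (hk : 1 ≤ k) (n : ℕ) (hn : n ≤ k - 1) :
    let r : ℚ := 2 * a * m * s - 1
    let u : ℚ := 2 * (a : ℚ) ^ 2 * m * r ^ (k - 1) - 1
    let v : ℚ := a
    let w : ℚ := 2 * a * m
    let x : ℚ := ((a : ℚ) * r ^ k - s) / (2 * a)
    (!![u, r ^ (k - 1 - n) * v; r ^ n * w, r * u - 2 * v * w * x] :
        Matrix (Fin 2) (Fin 2) ℚ) =
      !![(a : ℚ) * r ^ (k - 1 - n) - 1, 1; 1, 0] * !![1, 1; 1, 0] *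
        !![2 * (a : ℚ) * m * r ^ n - 1, 1; 1, 0] :=
  Nn_factorization_t1a_general a m s k ha hk n hn
end

section
/- Let $a > 1$, $m$, $s$, $k$ be positive integers and set $D = m\big(2(2ams - 1)^k + m(s - a(2ams - 1)^k)^2\big)$. Then $D$ is not a perfect square and the fundamental period of the regular continued fraction expansion of $\sqrt{D}$ has length $6k + 2$. -/
theorem cfX_add (x : ℝ) (m n : ℕ) : cfX x (m + n) = cfX (cfX x m) n := by
  induction n with
  | zero => rfl
  | succ n ih => exact congrArg (fun y : ℝ => (y - ⌊y⌋)⁻¹) ih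

theorem cfA_add (x : ℝ) (m n : ℕ) : cfA x (m + n) = cfA (cfX x m) n := by
  simp only [cfA, cfX_add]

def CFPath (x : ℝ) (n : ℕ) (y : ℝ) (B : ℤ) : Prop :=
  cfX x n = y ∧ ∀ j < n, cfA x j < B

namespace CFPath

variable {x y z : ℝ} {m n : ℕ} {B : ℤ}

theorem refl (x : ℝ) (B : ℤ) : CFPath x 0 x B :=
  ⟨rfl, fun _ h => absurd h (Nat.not_lt_zero _)⟩

theorem trans (hxy : CFPath x m y B) (hyz : CFPath y n z B) : CFPath x (m + n) z B := by
  refine ⟨by rw [cfX_add, hxy.1, hyz.1], fun j hj => ?_⟩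
  rcases lt_or_ge j m with hjm | hjm
  · exact hxy.2 j hjm
  · obtain ⟨i, rfl⟩ := Nat.exists_eq_add_of_le hjm
    rw [cfA_add, hxy.1]
    exact hyz.2 i (by omega)

theorem iterate {c : ℕ} (f : ℕ → ℝ) (h : ∀ j < n, CFPath (f j) c (f (j + 1)) B) :
    CFPath (f 0) (c * n) (f n) B := by
  induction n with
  | zero => exact refl _ B
  | succ n ih => exact (ih fun j hj => h j (by omega)).trans (h n (by omega))

end CFPath

theorem isLeast_cfPeriod {x : ℝ} {N : ℕ} (hN : 0 < N) (hper : cfX x (N + 1) = cfX x 1)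
    (hmax : ∀ n, 1 ≤ n → n < N → cfA x n < cfA x N) :
    IsLeast {p | cfPeriod x p} N := by
  refine ⟨⟨hN, fun n hn => ?_⟩, fun p ⟨_, hper_p⟩ => ?_⟩
  · obtain ⟨j, rfl⟩ := Nat.exists_eq_add_of_le' hn
    rw [show j + 1 + N = N + 1 + j by omega, cfA_add, hper, ← cfA_add, Nat.add_comm]
  · by_contra! hpN
    have h := hper_p (N - p) (by omega)
    rw [Nat.sub_add_cancel hpN.le] at h
    exact (hmax (N - p) (by omega) (by omega)).ne' h

noncomputable def quadSurd (D P Q : ℤ) : ℝ := (√(D : ℝ) + P) / Q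

def SqrtBracket (d D : ℤ) : Prop := 0 ≤ d ∧ d ^ 2 < D ∧ D < (d + 1) ^ 2

namespace SqrtBracket

variable {d D : ℤ}

theorem not_isSquare (h : SqrtBracket d D) : ¬IsSquare D := by
  rintro ⟨c, rfl⟩
  obtain ⟨hd, hlo, hhi⟩ := h
  have h1 : |d| < |c| := sq_lt_sq.1 (by nlinarith)
  have h2 : |c| < |d + 1| := sq_lt_sq.1 (by nlinarith)
  rw [abs_of_nonneg hd] at h1
  rw [abs_of_nonneg (show 0 ≤ d + 1 by omega)] at h2
  omega

theorem pos (h : SqrtBracket d D) : 0 < d := by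
  obtain ⟨hd, hlo, hhi⟩ := h
  rcases hd.eq_or_lt with rfl | hd
  · norm_num at hlo hhi; omega
  · exact hd

theorem lt_sqrt (h : SqrtBracket d D) : (d : ℝ) < √(D : ℝ) :=
  Real.lt_sqrt_of_sq_lt (by exact_mod_cast h.2.1)

theorem sqrt_lt (h : SqrtBracket d D) : √(D : ℝ) < d + 1 := by
  rw [Real.sqrt_lt' (by exact_mod_cast (show (0 : ℤ) < d + 1 by linarith [h.1]))]
  exact_mod_cast h.2.2

theorem floor_and_cfX_one_quadSurd (h : SqrtBracket d D) {P Q A P' Q' : ℤ}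
    (hQ : 0 < Q) (hQ' : 0 < Q') (hlo : A * Q ≤ d + P) (hhi : d + P < (A + 1) * Q)
    (hP' : P' = A * Q - P) (hQQ' : Q * Q' = D - P' ^ 2) :
    ⌊quadSurd D P Q⌋ = A ∧ cfX (quadSurd D P Q) 1 = quadSurd D P' Q' := by
  have hQr : (0 : ℝ) < Q := by exact_mod_cast hQ
  have hQ'r : (0 : ℝ) < Q' := by exact_mod_cast hQ'
  have hlo' : (A : ℝ) * Q ≤ d + P := by exact_mod_cast hlo
  have hhi' : (d : ℝ) + P + 1 ≤ (A + 1) * Q := by exact_mod_cast hhi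
  have hP'r : (P' : ℝ) = A * Q - P := by exact_mod_cast hP'
  have hQQ'r : (Q : ℝ) * Q' = D - P' ^ 2 := by exact_mod_cast hQQ'
  have hsq : √(D : ℝ) ^ 2 = D :=
    Real.sq_sqrt (by exact_mod_cast (sq_nonneg d).trans h.2.1.le)
  have h1 := h.lt_sqrt
  have h2 := h.sqrt_lt
  have hfloor : ⌊quadSurd D P Q⌋ = A := by
    rw [Int.floor_eq_iff, quadSurd, le_div_iff₀ hQr, div_lt_iff₀ hQr]
    constructor <;> linarith
  refine ⟨hfloor, ?_⟩
  have hpos : (0 : ℝ) < √(D : ℝ) - P' := by linarith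
  show (quadSurd D P Q - ⌊quadSurd D P Q⌋)⁻¹ = _
  rw [hfloor, quadSurd, quadSurd, div_sub' hQr.ne', inv_div,
    div_eq_div_iff (by linarith) hQ'r.ne']
  nlinarith

theorem cfPath_quadSurd (h : SqrtBracket d D) {P Q A P' Q' : ℤ}
    (hP : P ≤ d) (hQ : 2 ≤ Q) (hQ' : 0 < Q') (hlo : A * Q ≤ d + P) (hhi : d + P < (A + 1) * Q)
    (hP' : P' = A * Q - P) (hQQ' : Q * Q' = D - P' ^ 2) :
    CFPath (quadSurd D P Q) 1 (quadSurd D P' Q') (d + 1) := by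
  obtain ⟨hfloor, hnext⟩ := h.floor_and_cfX_one_quadSurd (by omega) hQ' hlo hhi hP' hQQ'
  refine ⟨hnext, fun j hj => ?_⟩
  obtain rfl : j = 0 := by omega
  show ⌊quadSurd D P Q⌋ < d + 1
  rw [hfloor]
  -- `A * Q ≤ d + P ≤ 2 * d` together with `2 ≤ Q` forces `A ≤ d`.
  by_contra! hA
  nlinarith [mul_le_mul_of_nonneg_right hA (by omega : (0 : ℤ) ≤ Q), h.1]

theorem floor_and_cfX_one_quadSurd_one (h : SqrtBracket d D) (P : ℤ) :
    ⌊quadSurd D P 1⌋ = d + P ∧ cfX (quadSurd D P 1) 1 = quadSurd D d (D - d ^ 2) :=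
  h.floor_and_cfX_one_quadSurd one_pos (by linarith [h.2.1]) (by simp) (by simp) (by ring)
    (by ring)

theorem isLeast_cfPeriod_sqrt {N : ℕ}
    (h : SqrtBracket d D) (hpath : CFPath (quadSurd D d (D - d ^ 2)) N (quadSurd D d 1) (d + 1)) :
    IsLeast {p | cfPeriod √(D : ℝ) p} (N + 1) := by
  have hsqrt : √(D : ℝ) = quadSurd D 0 1 := by simp [quadSurd]
  obtain ⟨hfloor0, hstart⟩ := h.floor_and_cfX_one_quadSurd_one 0
  obtain ⟨hfloor, hwrap⟩ := h.floor_and_cfX_one_quadSurd_one d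
  have hfull : CFPath √(D : ℝ) (1 + N) (quadSurd D d 1) (d + 1) := by
    refine CFPath.trans ⟨by rw [hsqrt, hstart], fun j hj => ?_⟩ hpath
    obtain rfl : j = 0 := by omega
    show ⌊√(D : ℝ)⌋ < d + 1
    rw [hsqrt, hfloor0]
    omega
  rw [Nat.add_comm] at hfull
  have hd := h.pos
  refine isLeast_cfPeriod (by omega) ?_ fun n _ hn => ?_
  · rw [cfX_add, hfull.1, hwrap, hsqrt, hstart]
  · calc cfA √(D : ℝ) n < d + 1 := hfull.2 n hn
      _ ≤ d + d := by omega
      _ = cfA √(D : ℝ) (N + 1) := by rw [cfA, hfull.1, hfloor]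

end SqrtBracket

section Family

variable {a m s r T d D u v : ℤ}

theorem sqrtBracket_of_eq (ha : 1 < a) (hm : 0 < m) (hs : 0 < s) (hsT : s < T)
    (hd : d = m * (a * T - s)) (hD : D = d ^ 2 + 2 * m * T) : SqrtBracket d D := by
  subst hd hD
  have haT : s < (a - 1) * T := by nlinarith
  refine ⟨by nlinarith, by nlinarith, by nlinarith⟩

theorem two_mul_add_one_le_of_eq (ha : 1 < a) (hm : 0 < m) (hs : 0 < s)
    (hr : r = 2 * a * m * s - 1) : 2 * m * s + 1 ≤ r := by
  subst hr; nlinarith [mul_pos hm hs]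

theorem two_le_midDenom (ha : 1 < a) (hm : 0 < m) (hs : 0 < s) (hu : 0 < u) (hv : 0 < v)
    (hr : r = 2 * a * m * s - 1) (hT : T = r * u * v) :
    2 ≤ 2 * m * (a * T + s - r * v) - r * u := by
  have hr0 : 0 < r := by nlinarith [two_mul_add_one_le_of_eq ha hm hs hr]
  have hau : u ≤ a * u - 1 := by nlinarith
  have hmrv : 0 < m * (r * v) := mul_pos hm (mul_pos hr0 hv)
  subst hT
  nlinarith [mul_le_mul_of_nonneg_left hau hmrv.le,
    mul_le_mul_of_nonneg_left (show 1 ≤ m * v by nlinarith) (mul_pos hr0 hu).le]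

theorem mul_midDenom_eq (hr : r = 2 * a * m * s - 1) (hT : T = r * u * v)
    (hd : d = m * (a * T - s)) (hD : D = d ^ 2 + 2 * m * T) :
    (2 * m * (r * v)) * (2 * m * (a * T + s - r * v) - r * u)
        = D - (d + 2 * m * s - 2 * m * (r * v)) ^ 2 ∧
      (r * u) * (2 * m * (a * T + s - r * v) - r * u) = D - (d + 2 * m * s - r * u) ^ 2 := by
  subst hd hD hT
  constructor <;> linear_combination (-2 * m * (r * u * v)) * hr

theorem cfPath_forward_block (ha : 1 < a) (hm : 0 < m) (hs : 0 < s) (hu : 0 < u) (hv : 0 < v)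
    (hr : r = 2 * a * m * s - 1) (hT : T = r * u * v)
    (hd : d = m * (a * T - s)) (hD : D = d ^ 2 + 2 * m * T) :
    CFPath (quadSurd D d (2 * m * (r * v))) 3 (quadSurd D d (2 * m * v)) (d + 1) := by
  have hr' := two_mul_add_one_le_of_eq ha hm hs hr
  have hms : 0 < m * s := mul_pos hm hs
  have hr0 : 0 < r := by nlinarith
  have hrv : r ≤ r * v := le_mul_of_one_le_right hr0.le (by omega)
  have hru : r ≤ r * u := le_mul_of_one_le_right hr0.le (by omega)
  have hau : u ≤ a * u - 1 := by nlinarith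
  have hmrv : 0 < m * (r * v) := mul_pos hm (mul_pos hr0 hv)
  have hmsv : m * s ≤ m * (r * v) := mul_le_mul_of_nonneg_left (by nlinarith) hm.le
  have hbr := sqrtBracket_of_eq ha hm hs (show s < T by subst hT; nlinarith) hd hD
  obtain ⟨hQQv, hQQu⟩ := mul_midDenom_eq hr hT hd hD
  have step₀ : CFPath (quadSurd D d (2 * m * (r * v))) 1
      (quadSurd D (d + 2 * m * s - 2 * m * (r * v)) (2 * m * (a * T + s - r * v) - r * u))
      (d + 1) :=
    hbr.cfPath_quadSurd (A := a * u - 1) le_rfl (by linarith)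
      (by linarith [two_le_midDenom ha hm hs hu hv hr hT])
      (by rw [hd, hT]; linarith) (by rw [hd, hT]; linarith) (by rw [hd, hT]; ring) hQQv
  have step₁ : CFPath
      (quadSurd D (d + 2 * m * s - 2 * m * (r * v)) (2 * m * (a * T + s - r * v) - r * u)) 1
      (quadSurd D (d + 2 * m * s - r * u) (r * u)) (d + 1) :=
    hbr.cfPath_quadSurd (A := 1) (by linarith) (two_le_midDenom ha hm hs hu hv hr hT)
      (by omega) (by rw [hd]; linarith)
      (by rw [hd, hT]; linarith [mul_le_mul_of_nonneg_left hau hmrv.le,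
        mul_le_mul_of_nonneg_left (show 1 ≤ m * v by nlinarith) (mul_pos hr0 hu).le])
      (by rw [hd]; ring) (by rw [← hQQu]; ring)
  have step₂ : CFPath (quadSurd D (d + 2 * m * s - r * u) (r * u)) 1
      (quadSurd D d (2 * m * v)) (d + 1) :=
    hbr.cfPath_quadSurd (A := 2 * a * m * v - 1) (by linarith) (by linarith) (by positivity)
      (by rw [hd, hT]; linarith) (by rw [hd, hT]; linarith)
      (by rw [hd, hT]; ring) (by rw [hD, hT]; ring)
  exact (step₀.trans step₁).trans step₂

/-- The backward block runs through the intermediate states of the forward one in reverse order. -/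
theorem cfPath_backward_block (ha : 1 < a) (hm : 0 < m) (hs : 0 < s) (hu : 0 < u) (hv : 0 < v)
    (hr : r = 2 * a * m * s - 1) (hT : T = r * u * v)
    (hd : d = m * (a * T - s)) (hD : D = d ^ 2 + 2 * m * T) :
    CFPath (quadSurd D d (r * u)) 3 (quadSurd D d u) (d + 1) := by
  have hr' := two_mul_add_one_le_of_eq ha hm hs hr
  have hms : 0 < m * s := mul_pos hm hs
  have hr0 : 0 < r := by nlinarith
  have hrv : r ≤ r * v := le_mul_of_one_le_right hr0.le (by omega)
  have hru : r ≤ r * u := le_mul_of_one_le_right hr0.le (by omega)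
  have hmrv : 0 < m * (r * v) := mul_pos hm (mul_pos hr0 hv)
  have hmsv : m * s ≤ m * (r * v) := mul_le_mul_of_nonneg_left (by nlinarith) hm.le
  have hbr := sqrtBracket_of_eq ha hm hs (show s < T by subst hT; nlinarith) hd hD
  obtain ⟨hQQv, hQQu⟩ := mul_midDenom_eq hr hT hd hD
  have step₀ : CFPath (quadSurd D d (r * u)) 1
      (quadSurd D (d + 2 * m * s - r * u) (2 * m * (a * T + s - r * v) - r * u)) (d + 1) :=
    hbr.cfPath_quadSurd (A := 2 * a * m * v - 1) le_rfl (by linarith)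
      (by linarith [two_le_midDenom ha hm hs hu hv hr hT])
      (by rw [hd, hT]; linarith) (by rw [hd, hT]; linarith) (by rw [hd, hT]; ring) hQQu
  have hgap : 2 * (2 * m * (a * T + s - r * v) - r * u) - (d + (d + 2 * m * s - r * u))
      = 2 * m * (a * u - 2) * (r * v - s) + u := by
    rw [hd, hT]; linear_combination (-u) * hr
  have hgap_pos : 0 ≤ 2 * m * (a * u - 2) * (r * v - s) :=
    mul_nonneg (mul_nonneg (by omega) (by nlinarith)) (by nlinarith)
  have step₁ : CFPath
      (quadSurd D (d + 2 * m * s - r * u) (2 * m * (a * T + s - r * v) - r * u)) 1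
      (quadSurd D (d + 2 * m * s - 2 * m * (r * v)) (2 * m * (r * v))) (d + 1) :=
    hbr.cfPath_quadSurd (A := 1) (by linarith) (two_le_midDenom ha hm hs hu hv hr hT)
      (by linarith) (by rw [hd]; linarith) (by linarith) (by rw [hd]; ring) (by rw [← hQQv]; ring)
  have step₂ : CFPath (quadSurd D (d + 2 * m * s - 2 * m * (r * v)) (2 * m * (r * v))) 1
      (quadSurd D d u) (d + 1) :=
    hbr.cfPath_quadSurd (A := a * u - 1) (by linarith) (by linarith) hu
      (by rw [hd, hT]; linarith) (by rw [hd, hT]; linarith)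
      (by rw [hd, hT]; ring) (by rw [hD, hT]; ring)
  exact (step₀.trans step₁).trans step₂

theorem lt_pow_of_eq {k : ℕ} (ha : 1 < a) (hm : 0 < m) (hs : 0 < s) (hk : 0 < k)
    (hr : r = 2 * a * m * s - 1) : s < r ^ k := by
  have hr' := two_mul_add_one_le_of_eq ha hm hs hr
  have hr1 : 1 ≤ r := by nlinarith
  nlinarith [le_self_pow₀ hr1 hk.ne', mul_pos hm hs]

theorem cfPath_family {k : ℕ} (ha : 1 < a) (hm : 0 < m) (hs : 0 < s) (hk : 0 < k)
    (hr : r = 2 * a * m * s - 1) (hd : d = m * (a * r ^ k - s))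
    (hD : D = d ^ 2 + 2 * m * r ^ k) :
    CFPath (quadSurd D d (D - d ^ 2)) (6 * k + 1) (quadSurd D d 1) (d + 1) := by
  have hr' := two_mul_add_one_le_of_eq ha hm hs hr
  have hr0 : 0 < r := by nlinarith
  have hbr := sqrtBracket_of_eq ha hm hs (lt_pow_of_eq ha hm hs hk hr) hd hD
  have hsplit : ∀ j < k, r ^ k = r * r ^ (k - (j + 1)) * r ^ j := fun j hj => by
    rw [← pow_succ', ← pow_add]; congr 1; omega
  have hshift : ∀ j < k, r * r ^ (k - (j + 1)) = r ^ (k - j) := fun j hj => by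
    rw [← pow_succ']; congr 1; omega
  have forward : CFPath (quadSurd D d (2 * m * r ^ k)) (3 * k) (quadSurd D d (2 * m)) (d + 1) := by
    have h := CFPath.iterate (c := 3) (fun j => quadSurd D d (2 * m * r ^ (k - j))) fun j hj => by
      simpa only [hshift j hj] using cfPath_forward_block ha hm hs (pow_pos hr0 j)
        (pow_pos hr0 (k - (j + 1))) hr (by rw [hsplit j hj]; ring) hd hD
    rwa [Nat.sub_zero, Nat.sub_self, pow_zero, mul_one] at h
  have middle : CFPath (quadSurd D d (2 * m)) 1 (quadSurd D d (r ^ k)) (d + 1) :=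
    hbr.cfPath_quadSurd (A := a * r ^ k - s) le_rfl (by omega) (by positivity)
      (by subst hd; nlinarith) (by subst hd; nlinarith) (by subst hd; ring) (by subst hD; ring)
  have backward : CFPath (quadSurd D d (r ^ k)) (3 * k) (quadSurd D d 1) (d + 1) := by
    have h := CFPath.iterate (c := 3) (fun j => quadSurd D d (r ^ (k - j))) fun j hj => by
      simpa only [hshift j hj] using cfPath_backward_block ha hm hs (pow_pos hr0 (k - (j + 1)))
        (pow_pos hr0 j) hr (hsplit j hj) hd hD
    rwa [Nat.sub_zero, Nat.sub_self, pow_zero] at h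
  rw [show D - d ^ 2 = 2 * m * r ^ k by rw [hD]; ring, show 6 * k + 1 = 3 * k + (1 + 3 * k) by ring]
  exact forward.trans (middle.trans backward)

end Family

/-- Theorem 2: for `a > 1` and
`D = m(2(2ams-1)^k + m(s - a(2ams-1)^k)^2)`, `D` is not a perfect square and
the fundamental period of the continued fraction of `√D` has length `6k + 2`. -/
theorem period_t1a (a m s k : ℕ) (ha : 1 < a) (hm : 0 < m) (hs : 0 < s)
    (hk : 0 < k) :
    let r : ℤ := 2 * a * m * s - 1
    let D : ℤ := m * (2 * r ^ k + m * ((s : ℤ) - a * r ^ k) ^ 2)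
    ¬ IsSquare D ∧
      IsLeast {p : ℕ | cfPeriod (Real.sqrt (D : ℝ)) p} (6 * k + 2) := by
  intro r D
  have ha' : (1 : ℤ) < a := by exact_mod_cast ha
  have hm' : (0 : ℤ) < m := by exact_mod_cast hm
  have hs' : (0 : ℤ) < s := by exact_mod_cast hs
  have hD : D = (m * (a * r ^ k - s)) ^ 2 + 2 * m * r ^ k := by simp only [D]; ring
  have hbr := sqrtBracket_of_eq ha' hm' hs' (lt_pow_of_eq ha' hm' hs' hk rfl) rfl hD
  exact ⟨hbr.not_isSquare, hbr.isLeast_cfPeriod_sqrt (cfPath_family ha' hm' hs' hk rfl rfl hD)⟩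
end

section
/- Let $b, s, k$ be positive integers and set $D = (4bs+1)^k + (b(4bs+1)^k + s)^2$. Then $D$ is a positive non-square integer and the fundamental period of the regular continued fraction expansion of $\sqrt{D}$ has length $2k + 1$. -/
theorem Int.not_isSquare_of_sq_lt_of_lt_sq {a n : ℤ} (h₁ : a ^ 2 < n) (h₂ : n < (a + 1) ^ 2) :
    ¬IsSquare n := by
  rintro ⟨r, rfl⟩
  rw [← sq] at h₁ h₂
  have := sq_lt_sq.1 h₁
  have := sq_lt_sq.1 h₂
  have := abs_add_le a 1
  rw [abs_one] at this
  omega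

theorem cfX_succ (x : ℝ) (n : ℕ) : cfX x (n + 1) = (cfX x n - cfA x n)⁻¹ := rfl

theorem cfX_succ_eq_div {x d : ℝ} {n : ℕ} {D P Q P' Q' : ℤ} (hd : d ^ 2 = D)
    (hx : cfX x n = (d + P) / Q) (hQ : Q ≠ 0) (hQ' : Q' ≠ 0) (hP' : P' = cfA x n * Q - P)
    (hD : D - P' ^ 2 = Q * Q') : cfX x (n + 1) = (d + P') / Q' := by
  have hD' : d ^ 2 - (P' : ℝ) ^ 2 = Q * Q' := by rw [hd]; exact_mod_cast hD
  have hdP' : d - P' ≠ 0 := by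
    intro h
    rw [sub_eq_zero.1 h, sub_self] at hD'
    exact mul_ne_zero (Int.cast_ne_zero.2 hQ) (Int.cast_ne_zero.2 hQ') hD'.symm
  have hsub : cfX x n - cfA x n = (d - P') / Q := by
    rw [hx, hP']
    push_cast
    field_simp
    ring
  rw [cfX_succ, hsub, inv_div, div_eq_div_iff hdP' (Int.cast_ne_zero.2 hQ')]
  linear_combination -hD'

theorem cfX_add_eq_of_cfX_add_eq {x : ℝ} {m p : ℕ} (h : cfX x (m + p) = cfX x m) {n : ℕ}
    (hn : m ≤ n) : cfX x (n + p) = cfX x n := by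
  induction n, hn using Nat.le_induction with
  | base => exact h
  | succ n _ ih => rw [Nat.add_right_comm, cfX_succ, cfX_succ, cfA, cfA, ih]

theorem cfPeriod_of_cfX_add_eq {x : ℝ} {p : ℕ} (hp : 0 < p) (h : cfX x (1 + p) = cfX x 1) :
    cfPeriod x p :=
  ⟨hp, fun _ hn => congrArg Int.floor (cfX_add_eq_of_cfX_add_eq h hn)⟩

theorem le_of_cfPeriod {x : ℝ} {N p : ℕ} (hN : ∀ n, 1 ≤ n → n < N → cfA x n < cfA x N)
    (hp : cfPeriod x p) : N ≤ p := by
  by_contra! hpN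
  have hrep := hp.2 (N - p) (by omega)
  rw [Nat.sub_add_cancel hpN.le] at hrep
  exact (hN (N - p) (by omega) (by have := hp.1; omega)).ne' hrep

namespace PeriodFamily

def M (B S : ℤ) : ℤ := 4 * B * S + 1

def A (B S : ℤ) (k : ℕ) : ℤ := B * M B S ^ k + S

def D (B S : ℤ) (k : ℕ) : ℤ := M B S ^ k + A B S k ^ 2

variable {B S : ℤ} {k : ℕ}

theorem D_sub_A_sq : D B S k - A B S k ^ 2 = M B S ^ k := by
  rw [D]; ring

theorem D_sub_A_sub_sq : D B S k - (A B S k - 2 * S) ^ 2 = M B S ^ (k + 1) := by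
  rw [D, A, M]; ring

theorem one_lt_M (hB : 0 < B) (hS : 0 < S) : 1 < M B S := by
  rw [M]; nlinarith [mul_pos hB hS]

theorem two_mul_lt_pow_M (hB : 0 < B) (hS : 0 < S) {j : ℕ} (hj : j ≠ 0) :
    2 * S < M B S ^ j :=
  calc 2 * S < M B S := by rw [M]; nlinarith [mul_pos hB hS]
    _ ≤ M B S ^ j := le_self_pow₀ (one_lt_M hB hS).le hj

theorem M_pow_pos (hB : 0 < B) (hS : 0 < S) (j : ℕ) : 0 < M B S ^ j :=
  pow_pos (zero_lt_one.trans (one_lt_M hB hS)) j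

theorem A_pos (hB : 0 < B) (hS : 0 < S) : 0 < A B S k := by
  have := M_pow_pos hB hS k
  rw [A]; positivity

theorem A_sq_lt_D (hB : 0 < B) (hS : 0 < S) : A B S k ^ 2 < D B S k := by
  linarith [D_sub_A_sq (B := B) (S := S) (k := k), M_pow_pos hB hS k]

theorem D_lt_A_add_one_sq (hB : 0 < B) (hS : 0 < S) : D B S k < (A B S k + 1) ^ 2 := by
  have := M_pow_pos hB hS k
  rw [D, A]; nlinarith

theorem floor_sqrt_D (hB : 0 < B) (hS : 0 < S) : ⌊√(D B S k : ℝ)⌋ = A B S k := by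
  have hA := A_pos (k := k) hB hS
  have hgt := A_sq_lt_D (k := k) hB hS
  have hlt := D_lt_A_add_one_sq (k := k) hB hS
  have hD : (0 : ℝ) ≤ D B S k := by exact_mod_cast (sq_nonneg _).trans hgt.le
  rw [Int.floor_eq_iff, Real.le_sqrt (by exact_mod_cast hA.le) hD,
    Real.sqrt_lt' (by positivity)]
  exact ⟨by exact_mod_cast hgt.le, by exact_mod_cast hlt⟩

theorem cfA_eq_ediv (hB : 0 < B) (hS : 0 < S) {n : ℕ} {P Q : ℤ} (hQ : 0 < Q)
    (hx : cfX √(D B S k : ℝ) n = (√(D B S k : ℝ) + P) / Q) :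
    cfA √(D B S k : ℝ) n = (A B S k + P) / Q := by
  rw [cfA, hx, Int.floor_div_cast_of_nonneg hQ.le, Int.floor_add_intCast, floor_sqrt_D hB hS]

theorem A_add_A_ediv (hB : 0 < B) (hS : 0 < S) {i j : ℕ} (hij : i + j = k) (hj : j ≠ 0) :
    (A B S k + A B S k) / M B S ^ j = 2 * B * M B S ^ i := by
  have h : A B S k + A B S k = 2 * S + M B S ^ j * (2 * B * M B S ^ i) := by
    rw [A, ← hij, pow_add]; ring
  rw [h, Int.add_mul_ediv_left _ _ (M_pow_pos hB hS j).ne',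
    Int.ediv_eq_zero_of_lt (by positivity) (two_mul_lt_pow_M hB hS hj), zero_add]

theorem A_add_A_sub_ediv (hB : 0 < B) (hS : 0 < S) {i j : ℕ} (hij : i + j = k) :
    (A B S k + (A B S k - 2 * S)) / M B S ^ j = 2 * B * M B S ^ i := by
  have h : A B S k + (A B S k - 2 * S) = M B S ^ j * (2 * B * M B S ^ i) := by
    rw [A, ← hij, pow_add]; ring
  rw [h, Int.mul_ediv_cancel_left _ (M_pow_pos hB hS j).ne']

theorem two_mul_mul_pow_lt_two_mul_A (hB : 0 < B) (hS : 0 < S) {i : ℕ} (hi : i < k) :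
    2 * B * M B S ^ i < 2 * A B S k := by
  have := pow_lt_pow_right₀ (one_lt_M hB hS) hi
  rw [A]; nlinarith

theorem sq_sqrt_D (hB : 0 < B) (hS : 0 < S) : √(D B S k : ℝ) ^ 2 = D B S k :=
  Real.sq_sqrt (by exact_mod_cast ((sq_nonneg _).trans (A_sq_lt_D (k := k) hB hS).le))

theorem cfX_even_of_odd (hB : 0 < B) (hS : 0 < S) {i j : ℕ} (hij : i + (j + 1) = k)
    (hx : cfX √(D B S k : ℝ) (2 * i + 1) = (√(D B S k : ℝ) + A B S k) / (M B S ^ (j + 1) : ℤ)) :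
    cfX √(D B S k : ℝ) (2 * i + 2) =
      (√(D B S k : ℝ) + (A B S k - 2 * S : ℤ)) / (M B S ^ (i + 1) : ℤ) := by
  refine cfX_succ_eq_div (sq_sqrt_D hB hS) hx (M_pow_pos hB hS _).ne' (M_pow_pos hB hS _).ne' ?_ ?_
  · rw [cfA_eq_ediv hB hS (M_pow_pos hB hS _) hx, A_add_A_ediv hB hS hij j.succ_ne_zero,
      mul_assoc, ← pow_add, hij, A]
    ring
  · rw [D_sub_A_sub_sq, ← pow_add]
    congr 1; omega

theorem cfX_odd_of_even (hB : 0 < B) (hS : 0 < S) {i j : ℕ} (hij : i + 1 + j = k)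
    (hx : cfX √(D B S k : ℝ) (2 * i + 2) =
      (√(D B S k : ℝ) + (A B S k - 2 * S : ℤ)) / (M B S ^ (i + 1) : ℤ)) :
    cfX √(D B S k : ℝ) (2 * (i + 1) + 1) = (√(D B S k : ℝ) + A B S k) / (M B S ^ j : ℤ) := by
  have hji : j + (i + 1) = k := by omega
  change cfX _ (2 * i + 2 + 1) = _
  refine cfX_succ_eq_div (sq_sqrt_D hB hS) hx (M_pow_pos hB hS _).ne' (M_pow_pos hB hS _).ne' ?_ ?_
  · rw [cfA_eq_ediv hB hS (M_pow_pos hB hS _) hx, A_add_A_sub_ediv hB hS hji,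
      mul_assoc, ← pow_add, hji, A]
    ring
  · rw [D_sub_A_sq, ← pow_add, hij]

theorem cfX_odd (hB : 0 < B) (hS : 0 < S) {i j : ℕ} (hij : i + j = k) :
    cfX √(D B S k : ℝ) (2 * i + 1) = (√(D B S k : ℝ) + A B S k) / (M B S ^ j : ℤ) := by
  induction i generalizing j with
  | zero =>
    have h0 : cfX √(D B S k : ℝ) 0 = (√(D B S k : ℝ) + (0 : ℤ)) / (1 : ℤ) := by simp [cfX]
    refine cfX_succ_eq_div (sq_sqrt_D hB hS) h0 one_ne_zero (M_pow_pos hB hS _).ne' ?_ ?_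
    · rw [cfA_eq_ediv hB hS one_pos h0]; simp
    · rw [D_sub_A_sq, one_mul, ← hij, zero_add]
  | succ i ih =>
    exact cfX_odd_of_even hB hS (by omega)
      (cfX_even_of_odd hB hS (by omega) (ih (j := j + 1) (by omega)))

theorem cfA_lt_cfA_two_mul_add_one (hB : 0 < B) (hS : 0 < S) {n : ℕ} (hn : 1 ≤ n)
    (hnk : n < 2 * k + 1) : cfA √(D B S k : ℝ) n < cfA √(D B S k : ℝ) (2 * k + 1) := by
  have htop : cfA √(D B S k : ℝ) (2 * k + 1) = 2 * A B S k := by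
    rw [cfA_eq_ediv hB hS (M_pow_pos hB hS 0) (cfX_odd hB hS (add_zero k))]
    simp only [pow_zero, Int.ediv_one]
    ring
  rw [htop]
  obtain ⟨i, rfl | rfl⟩ : ∃ i, n = 2 * i + 1 ∨ n = 2 * i + 2 := ⟨(n - 1) / 2, by omega⟩
  · have hij : i + (k - i) = k := by omega
    rw [cfA_eq_ediv hB hS (M_pow_pos hB hS _) (cfX_odd hB hS hij),
      A_add_A_ediv hB hS hij (by omega)]
    exact two_mul_mul_pow_lt_two_mul_A hB hS (by omega)
  · have hij : i + (k - i - 1 + 1) = k := by omega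
    rw [cfA_eq_ediv hB hS (M_pow_pos hB hS _) (cfX_even_of_odd hB hS hij (cfX_odd hB hS hij)),
      A_add_A_sub_ediv hB hS (by omega : k - i - 1 + (i + 1) = k)]
    exact two_mul_mul_pow_lt_two_mul_A hB hS (by omega)

theorem cfX_two_mul_add_two (hB : 0 < B) (hS : 0 < S) :
    cfX √(D B S k : ℝ) (2 * k + 2) = cfX √(D B S k : ℝ) 1 := by
  have hx := cfX_odd hB hS (add_zero k)
  rw [cfX_odd hB hS (i := 0) (zero_add k)]
  refine cfX_succ_eq_div (sq_sqrt_D hB hS) hx (M_pow_pos hB hS _).ne' (M_pow_pos hB hS _).ne' ?_ ?_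
  · rw [cfA_eq_ediv hB hS (M_pow_pos hB hS _) hx]
    simp only [pow_zero, Int.ediv_one]
    ring
  · rw [D_sub_A_sq, pow_zero, one_mul]

end PeriodFamily

theorem period_t2_general (b s k : ℕ) (hb : 0 < b) (hs : 0 < s) :
    let D : ℤ := (4 * (b : ℤ) * s + 1) ^ k +
      ((b : ℤ) * (4 * (b : ℤ) * s + 1) ^ k + s) ^ 2
    0 < D ∧ ¬ IsSquare D ∧
      IsLeast {p : ℕ | cfPeriod (Real.sqrt (D : ℝ)) p} (2 * k + 1) := by
  have hB : (0 : ℤ) < b := by exact_mod_cast hb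
  have hS : (0 : ℤ) < s := by exact_mod_cast hs
  change 0 < PeriodFamily.D b s k ∧ ¬IsSquare (PeriodFamily.D b s k) ∧
    IsLeast {p : ℕ | cfPeriod √(PeriodFamily.D b s k : ℝ) p} (2 * k + 1)
  refine ⟨(sq_nonneg _).trans_lt (PeriodFamily.A_sq_lt_D hB hS),
    Int.not_isSquare_of_sq_lt_of_lt_sq (PeriodFamily.A_sq_lt_D hB hS)
      (PeriodFamily.D_lt_A_add_one_sq hB hS),
    cfPeriod_of_cfX_add_eq (Nat.succ_pos _) ?_, fun p hp ↦ le_of_cfPeriod ?_ hp⟩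
  · rw [add_comm, PeriodFamily.cfX_two_mul_add_two hB hS]
  · exact fun n hn hnk ↦ PeriodFamily.cfA_lt_cfA_two_mul_add_one hB hS hn hnk

/-- Theorem t2: for `D = (4bs+1)^k + (b(4bs+1)^k + s)^2`, `D` is
a positive non-square integer and the fundamental period of the continued
fraction of `√D` has length `2k + 1`. -/
theorem period_t2 (b s k : ℕ) (hb : 0 < b) (hs : 0 < s) (hk : 0 < k) :
    let D : ℤ := (4 * (b : ℤ) * s + 1) ^ k +
      ((b : ℤ) * (4 * (b : ℤ) * s + 1) ^ k + s) ^ 2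
    0 < D ∧ ¬ IsSquare D ∧
      IsLeast {p : ℕ | cfPeriod (Real.sqrt (D : ℝ)) p} (2 * k + 1) :=
  period_t2_general b s k hb hs
end

section
/- Let $b, s$ be positive integers and set $r = 1 + 4bs$, $v = 2b$, $u = 1 + 4b^2 r^{2k-1}$, $x = s + b r^{2k}$, for a positive integer $k$. Then for each integer $n$ with $0 \le n \le k-1$, the matrix $\begin{pmatrix} u & r^{k-1-n} v \\ r^{k+n} v & ru - 2vx \end{pmatrix}$ equals $\begin{pmatrix} 2b r^{k-1-n} & 1 \\ 1 & 0 \end{pmatrix} \begin{pmatrix} 2b r^{k+n} & 1 \\ 1 & 0 \end{pmatrix}$. -/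
/-! The right-hand side is a product of two continued-fraction matrices, which equals
`!![a * c + 1, a; c, 1]`. The exponents `(k - 1 - n) + (k + n) = 2k - 1` add up to the one in `u`,
and with `r = 1 + 4bs` the lower-right entry `r u - 2 v x` collapses to `r - 4bs = 1`. -/

theorem Matrix.continuant_mul_continuant {R : Type*} [Semiring R] (a c : R) :
    !![a, 1; 1, 0] * !![c, 1; 1, 0] = !![a * c + 1, a; c, 1] := by
  simp

theorem Nn_factorization_t2_general (b s k : ℕ) (hk : 0 < k)
    (n : ℕ) (hn : n ≤ k - 1) :
    let r : ℤ := 1 + 4 * b * s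
    let v : ℤ := 2 * b
    let u : ℤ := 1 + 4 * (b : ℤ) ^ 2 * r ^ (2 * k - 1)
    let x : ℤ := s + b * r ^ (2 * k)
    (!![u, r ^ (k - 1 - n) * v; r ^ (k + n) * v, r * u - 2 * v * x] :
        Matrix (Fin 2) (Fin 2) ℤ) =
      !![2 * (b : ℤ) * r ^ (k - 1 - n), 1; 1, 0] *
        !![2 * (b : ℤ) * r ^ (k + n), 1; 1, 0] := by
  intro r v u x
  have hu : u = 2 * b * r ^ (k - 1 - n) * (2 * b * r ^ (k + n)) + 1 := by
    rw [mul_mul_mul_comm, ← pow_add, show k - 1 - n + (k + n) = 2 * k - 1 by omega]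
    ring
  have hcorner : r * u - 2 * v * x = 1 := by
    obtain ⟨m, rfl⟩ : ∃ m, k = m + 1 := Nat.exists_eq_succ_of_ne_zero hk.ne'
    simp only [u, v, x, r, show 2 * (m + 1) - 1 = 2 * m + 1 by omega]
    ring
  rw [Matrix.continuant_mul_continuant, hcorner, hu, mul_comm _ v, mul_comm _ v]

/-- the factorization of the matrices `N_n` used in the proof of
Theorem t2 (even case), with `r = 1 + 4bs`. -/
theorem Nn_factorization_t2 (b s k : ℕ) (hb : 0 < b) (hs : 0 < s) (hk : 0 < k)
    (n : ℕ) (hn : n ≤ k - 1) :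
    let r : ℤ := 1 + 4 * b * s
    let v : ℤ := 2 * b
    let u : ℤ := 1 + 4 * (b : ℤ) ^ 2 * r ^ (2 * k - 1)
    let x : ℤ := s + b * r ^ (2 * k)
    (!![u, r ^ (k - 1 - n) * v; r ^ (k + n) * v, r * u - 2 * v * x] :
        Matrix (Fin 2) (Fin 2) ℤ) =
      !![2 * (b : ℤ) * r ^ (k - 1 - n), 1; 1, 0] *
        !![2 * (b : ℤ) * r ^ (k + n), 1; 1, 0] :=
  Nn_factorization_t2_general b s k hk n hn
end
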